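/- arXiv:2510.27638 — 3 statements merged into one kernel-verified Lean document; each statement's English description precedes it below -/
import Mathlib

section
/- Let ℓ: [0,1] × {0,1} → [−1,1] be a loss of bounded variation (ℓ ∈ L_BV), let p*: X → [0,1] be a predictor, let f: X → [0,1] be any measurable function, let g be a group with P_g > 0, and let ε > 0. Then |E_{(x,y)~D}[(y − p*(x))·Δℓ(f(x)) | g(x)=1]| ≤ 9·sup_{v ∈ [0,1]} |E_{(x,y)~D}[(y − p*(x))·1[f(x) ≤ v] | g(x)=1]| + ε·√(1/P_g). -/
open MeasureTheory ProbabilityTheory Set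

noncomputable section

/-- Real value of a Boolean label. -/
def lab (y : Bool) : ℝ := if y then 1 else 0

/-- Conditional expectation of `f` under `D`, given that the group membership
function `g` evaluates to `true` on the context. -/
def condE {X : Type*} [MeasurableSpace X] (D : Measure (X × Bool)) (g : X → Bool)
    (f : X × Bool → ℝ) : ℝ :=
  ∫ z, f z ∂(D[|{z : X × Bool | g z.1 = true}])

/-- Probability of group `g` under `D`. -/
def Pg {X : Type*} [MeasurableSpace X] (D : Measure (X × Bool)) (g : X → Bool) : ℝ :=
  (D {z : X × Bool | g z.1 = true}).toReal

/-- The set of all partition sums `∑ |f(z_{j+1}) - f(z_j)|` over finite partitions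
`0 = z_0 < z_1 < ⋯ < z_m = 1` of `[0,1]`.  `V(f) ≤ C` iff every element is `≤ C`. -/
def partitionSums (f : ℝ → ℝ) : Set ℝ :=
  {S | ∃ (m : ℕ) (z : ℕ → ℝ), z 0 = 0 ∧ z m = 1 ∧ (∀ i < m, z i < z (i + 1)) ∧
      S = ∑ i ∈ Finset.range m, |f (z (i + 1)) - f (z i)|}

/-!
Write `w = y - p⋆(x)` and `K` for the supremum of the threshold correlations
`|E[w · 1[f ≤ v] | g]|`. By layer-cake (Fubini), for `u` monotone on `[0,1]` the quantity
`E[w · u(f)] - u(1) E[w]` is an average over `t ∈ [u 0, u 1]` of `-E[w · 1[u(f) ≤ t]]`, and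
`{u ≤ t}` is an initial segment of `[0,1]`, so each term is at most `K` (half-open segments by
monotone convergence); hence the bound `(u 1 - u 0) K`. The Jordan decomposition of `Δℓ`, whose
total variation is at most `2`, into two monotone parts then gives `|E[w · Δℓ(f)]| ≤ 8 K`.
-/

def partitionSumsTo (G : ℝ → ℝ) (t : ℝ) : Set ℝ :=
  {S | ∃ (m : ℕ) (z : ℕ → ℝ), z 0 = 0 ∧ z m = t ∧ (∀ i < m, z i < z (i + 1)) ∧
      S = ∑ i ∈ Finset.range m, |G (z (i + 1)) - G (z i)|}

section PartitionSums

variable {G : ℝ → ℝ}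

lemma zero_mem_partitionSumsTo : 0 ∈ partitionSumsTo G 0 :=
  ⟨0, fun _ => 0, rfl, rfl, by simp, by simp⟩

lemma add_mem_partitionSumsTo {S s t : ℝ} (hS : S ∈ partitionSumsTo G s) (hst : s < t) :
    S + |G t - G s| ∈ partitionSumsTo G t := by
  obtain ⟨m, z, hz0, hzm, hz, rfl⟩ := hS
  refine ⟨m + 1, Function.update z (m + 1) t, by simp [hz0], by simp, fun i hi => ?_, ?_⟩
  · rcases (Nat.lt_succ_iff.mp hi).lt_or_eq with hi | rfl
    · simpa [Function.update_of_ne (by omega : i ≠ m + 1),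
        Function.update_of_ne (by omega : i + 1 ≠ m + 1)] using hz i hi
    · simpa [hzm] using hst
  · rw [Finset.sum_range_succ]
    congr 1
    · refine Finset.sum_congr rfl fun i hi => ?_
      have hi := Finset.mem_range.mp hi
      rw [Function.update_of_ne (by omega), Function.update_of_ne (by omega)]
    · simp [hzm]

lemma exists_mem_partitionSumsTo_ge {u : ℕ → ℝ} (hu : Monotone u) (hu0 : 0 ≤ u 0) (n : ℕ) :
    ∃ S ∈ partitionSumsTo G (u n), ∑ i ∈ Finset.range n, |G (u (i + 1)) - G (u i)| ≤ S := by
  induction n with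
  | zero =>
    rcases hu0.eq_or_lt with h | h
    · exact ⟨0, h ▸ zero_mem_partitionSumsTo, by simp⟩
    · exact ⟨_, add_mem_partitionSumsTo zero_mem_partitionSumsTo h, by simp⟩
  | succ n ih =>
    obtain ⟨S, hS, hle⟩ := ih
    rw [Finset.sum_range_succ]
    rcases (hu n.le_succ).eq_or_lt with h | h
    · exact ⟨S, h ▸ hS, by simpa [h] using hle⟩
    · exact ⟨_, add_mem_partitionSumsTo hS h, by linarith⟩

lemma eVariationOn_Icc_le_of_partitionSums_le {C : ℝ} (hG : ∀ S ∈ partitionSums G, S ≤ C) :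
    eVariationOn G (Icc 0 1) ≤ ENNReal.ofReal C := by
  refine iSup_le fun ⟨n, u, hu, hmem⟩ => ?_
  simp only [edist_dist, Real.dist_eq]
  rw [← ENNReal.ofReal_sum_of_nonneg fun i _ => abs_nonneg _]
  refine ENNReal.ofReal_le_ofReal ?_
  obtain ⟨S, hS, hle⟩ := exists_mem_partitionSumsTo_ge (G := G) hu (hmem 0).1 n
  rcases (hmem n).2.eq_or_lt with h | h
  · exact hle.trans (hG S (h ▸ hS : S ∈ partitionSumsTo G 1))
  · have := hG _ (add_mem_partitionSumsTo hS h)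
    linarith [abs_nonneg (G 1 - G (u n))]

lemma partitionSums_sub_le {H : ℝ → ℝ} {a b : ℝ} (hG : ∀ S ∈ partitionSums G, S ≤ a)
    (hH : ∀ S ∈ partitionSums H, S ≤ b) : ∀ S ∈ partitionSums (G - H), S ≤ a + b := by
  rintro _ ⟨m, z, hz0, hzm, hz, rfl⟩
  calc ∑ i ∈ Finset.range m, |(G - H) (z (i + 1)) - (G - H) (z i)|
      ≤ ∑ i ∈ Finset.range m, (|G (z (i + 1)) - G (z i)| + |H (z (i + 1)) - H (z i)|) :=
        Finset.sum_le_sum fun i _ => by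
          simpa only [Pi.sub_apply, sub_sub_sub_comm] using abs_sub _ _
    _ ≤ a + b := by
        rw [Finset.sum_add_distrib]
        exact add_le_add (hG _ ⟨m, z, hz0, hzm, hz, rfl⟩) (hH _ ⟨m, z, hz0, hzm, hz, rfl⟩)

end PartitionSums

lemma IsLowerSet.eq_empty_or_univ_or_Iic_or_Iio {α : Type*} [ConditionallyCompleteLinearOrder α]
    {s : Set α} (hs : IsLowerSet s) :
    s = ∅ ∨ s = univ ∨ (∃ a, s = Iic a) ∨ ∃ a, s = Iio a := by
  rcases s.eq_empty_or_nonempty with h | hne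
  · exact Or.inl h
  by_cases hbdd : BddAbove s
  · by_cases hmem : sSup s ∈ s
    · refine Or.inr (Or.inr (Or.inl ⟨sSup s, Subset.antisymm (fun x hx => le_csSup hbdd hx)
        fun x hx => hs hx hmem⟩))
    · refine Or.inr (Or.inr (Or.inr ⟨sSup s, Subset.antisymm
        (fun x hx => (le_csSup hbdd hx).lt_of_ne fun h => hmem (h ▸ hx)) fun x hx => ?_⟩))
      obtain ⟨y, hy, hxy⟩ := exists_lt_of_lt_csSup hne hx
      exact hs hxy.le hy
  · refine Or.inr (Or.inl (eq_univ_of_forall fun x => ?_))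
    obtain ⟨y, hy, hxy⟩ := not_bddAbove_iff.mp hbdd x
    exact hs hxy.le hy

lemma preimage_Iic_comp_eq_preimage_lowerClosure {Ω α β : Type*} [Preorder α] [Preorder β]
    {F : Ω → α} {u : α → β} {s : Set α} (hu : MonotoneOn u s) (hF : ∀ z, F z ∈ s) (t : β) :
    (fun z => u (F z)) ⁻¹' Iic t = F ⁻¹' lowerClosure {q | q ∈ s ∧ u q ≤ t} := by
  ext z
  simp only [mem_preimage, mem_Iic, SetLike.mem_coe, mem_lowerClosure, mem_ofPred_eq]
  exact ⟨fun h => ⟨F z, ⟨hF z, h⟩, le_rfl⟩,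
    fun ⟨q, ⟨hq, hqt⟩, hFq⟩ => (hu (hF z) hq hFq).trans hqt⟩

lemma setIntegral_Icc_indicator_Ici {a b c : ℝ} (hac : a ≤ c) (hcb : c ≤ b) (x : ℝ) :
    ∫ t in Icc a b, (Ici c).indicator (fun _ => x) t = (b - c) * x := by
  rw [setIntegral_indicator measurableSet_Ici, setIntegral_const,
    show Icc a b ∩ Ici c = Icc c b by
      ext t; simp only [mem_inter_iff, mem_Icc, mem_Ici]; grind,
    Real.volume_real_Icc_of_le hcb, smul_eq_mul]

section ThresholdBounds

variable {Ω : Type*} [MeasurableSpace Ω] {μ : Measure Ω} {w F : Ω → ℝ} {K : ℝ}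

lemma integral_mul_ite_le_eq_setIntegral (hF : Measurable F) (v : ℝ) :
    ∫ z, w z * (if F z ≤ v then 1 else 0) ∂μ = ∫ z in F ⁻¹' Iic v, w z ∂μ := by
  rw [← integral_indicator (hF measurableSet_Iic)]
  congr 1 with z
  by_cases h : F z ≤ v <;> simp [h]

lemma abs_setIntegral_le_integral_abs (hw : Integrable w μ) (s : Set Ω) :
    |∫ z in s, w z ∂μ| ≤ ∫ z, |w z| ∂μ :=
  abs_integral_le_integral_abs.trans
    (setIntegral_le_integral hw.abs (ae_of_all _ fun _ => abs_nonneg _))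

lemma MeasureTheory.Integrable.mul_of_forall_mem_Icc {h : Ω → ℝ} (hw : Integrable w μ)
    (hh : AEStronglyMeasurable h μ) {a b : ℝ} (hmem : ∀ z, h z ∈ Icc a b) :
    Integrable (fun z => w z * h z) μ :=
  hw.mul_bdd hh (c := |a| + |b|) (ae_of_all _ fun z => by
    rw [Real.norm_eq_abs, abs_le]
    constructor <;> linarith [(hmem z).1, (hmem z).2, neg_abs_le a, le_abs_self b,
      abs_nonneg a, abs_nonneg b])

lemma MonotoneOn.measurable_comp {u : ℝ → ℝ} {s : Set ℝ} (hu : MonotoneOn u s) (hF : Measurable F)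
    (hFs : ∀ z, F z ∈ s) : Measurable fun z => u (F z) :=
  measurable_of_Iic fun t => preimage_Iic_comp_eq_preimage_lowerClosure hu hFs t ▸
    hF (lowerClosure _).lower.ordConnected.measurableSet

lemma abs_setIntegral_preimage_Iic_le_of_Icc (hF01 : ∀ z, F z ∈ Icc 0 1)
    (hK : ∀ v ∈ Icc (0 : ℝ) 1, |∫ z in F ⁻¹' Iic v, w z ∂μ| ≤ K) (v : ℝ) :
    |∫ z in F ⁻¹' Iic v, w z ∂μ| ≤ K := by
  rcases lt_or_ge v 0 with hv0 | hv0
  · have hempty : F ⁻¹' Iic v = ∅ :=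
      eq_empty_of_forall_notMem fun z hz => (hv0.trans_le (hF01 z).1).not_ge hz
    simpa [hempty] using (abs_nonneg _).trans (hK 0 (left_mem_Icc.mpr zero_le_one))
  rcases le_or_gt v 1 with hv1 | hv1
  · exact hK v ⟨hv0, hv1⟩
  · have huniv : F ⁻¹' Iic v = F ⁻¹' Iic 1 := by
      ext z
      simp only [mem_preimage, mem_Iic]
      exact ⟨fun _ => (hF01 z).2, fun h => h.trans hv1.le⟩
    simpa [huniv] using hK 1 (right_mem_Icc.mpr zero_le_one)

lemma abs_setIntegral_preimage_Iic_le_sSup (hw : Integrable w μ) (hF01 : ∀ z, F z ∈ Icc 0 1)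
    (v : ℝ) : |∫ z in F ⁻¹' Iic v, w z ∂μ| ≤
      sSup ((fun v => |∫ z in F ⁻¹' Iic v, w z ∂μ|) '' Icc 0 1) :=
  have hbdd : BddAbove ((fun v => |∫ z in F ⁻¹' Iic v, w z ∂μ|) '' Icc 0 1) :=
    ⟨∫ z, |w z| ∂μ, by
      rintro _ ⟨v, -, rfl⟩
      exact abs_setIntegral_le_integral_abs hw _⟩
  abs_setIntegral_preimage_Iic_le_of_Icc hF01 (fun v hv => le_csSup hbdd ⟨v, hv, rfl⟩) v

lemma abs_setIntegral_preimage_Iio_le (hw : Integrable w μ) (hF : Measurable F)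
    (hK : ∀ v, |∫ z in F ⁻¹' Iic v, w z ∂μ| ≤ K) (v : ℝ) :
    |∫ z in F ⁻¹' Iio v, w z ∂μ| ≤ K := by
  obtain ⟨u, hu, hlt, hlim⟩ := exists_seq_strictMono_tendsto v
  have hunion : ⋃ n, F ⁻¹' Iic (u n) = F ⁻¹' Iio v := by
    rw [← preimage_iUnion, iUnion_Iic_eq_Iio_of_lt_of_tendsto hlt hlim]
  have hconv := tendsto_setIntegral_of_monotone (μ := μ) (f := w)
    (fun n => hF measurableSet_Iic)
    (fun m n hmn => preimage_mono (Iic_subset_Iic.mpr (hu.monotone hmn))) hw.integrableOn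
  rw [hunion] at hconv
  exact le_of_tendsto' hconv.abs fun n => hK (u n)

lemma abs_setIntegral_preimage_le_of_isLowerSet (hw : Integrable w μ) (hF : Measurable F)
    {c : ℝ} (hFc : ∀ z, F z ≤ c) (hK : ∀ v, |∫ z in F ⁻¹' Iic v, w z ∂μ| ≤ K) {s : Set ℝ}
    (hs : IsLowerSet s) : |∫ z in F ⁻¹' s, w z ∂μ| ≤ K := by
  rcases hs.eq_empty_or_univ_or_Iic_or_Iio with rfl | rfl | ⟨a, rfl⟩ | ⟨a, rfl⟩
  · simpa using (abs_nonneg _).trans (hK 0)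
  · rw [show F ⁻¹' univ = F ⁻¹' Iic c from (preimage_univ).trans
      (eq_univ_of_forall hFc).symm]
    exact hK c
  · exact hK a
  · exact abs_setIntegral_preimage_Iio_le hw hF hK a

lemma abs_integral_mul_sub_le_of_abs_setIntegral_sublevel_le [SFinite μ] {h : Ω → ℝ}
    (hw : Integrable w μ) (hh : Measurable h) {a b : ℝ} (hab : a ≤ b)
    (hmem : ∀ z, h z ∈ Icc a b) (hK : ∀ t, |∫ z in {z | h z ≤ t}, w z ∂μ| ≤ K) :
    |∫ z, w z * h z ∂μ - b * ∫ z, w z ∂μ| ≤ (b - a) * K := by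
  -- `b - h z = ∫ t in [a, b], 1[h z ≤ t]`: integrate against `w` and swap the integrals.
  set ν := volume.restrict (Icc a b)
  have hint : Integrable (Function.uncurry fun z t => {z | h z ≤ t}.indicator w z) (μ.prod ν) := by
    have : (Function.uncurry fun z t => {z | h z ≤ t}.indicator w z) =
        {p : Ω × ℝ | h p.1 ≤ p.2}.indicator (fun p => w p.1) := by
      ext ⟨z, t⟩
      simp [indicator_apply]
    rw [this]
    exact (hw.comp_fst ν).indicator (measurableSet_le (hh.comp measurable_fst) measurable_snd)
  have hinner : ∀ z, ∫ t, {z | h z ≤ t}.indicator w z ∂ν = (b - h z) * w z := by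
    intro z
    rw [← setIntegral_Icc_indicator_Ici (hmem z).1 (hmem z).2]
    congr 1 with t
  have hfubini : b * ∫ z, w z ∂μ - ∫ z, w z * h z ∂μ =
      ∫ t, ∫ z in {z | h z ≤ t}, w z ∂μ ∂ν := calc
    _ = ∫ z, ∫ t, {z | h z ≤ t}.indicator w z ∂ν ∂μ := by
      rw [← integral_const_mul, ← integral_sub (hw.const_mul b)
        (hw.mul_of_forall_mem_Icc hh.aestronglyMeasurable hmem)]
      congr 1 with z
      rw [hinner]
      ring
    _ = ∫ t, ∫ z, {z | h z ≤ t}.indicator w z ∂μ ∂ν := integral_integral_swap hint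
    _ = ∫ t, ∫ z in {z | h z ≤ t}, w z ∂μ ∂ν := by
      congr 1 with t
      exact integral_indicator (hh measurableSet_Iic)
  rw [abs_sub_comm, hfubini, ← Real.volume_real_Icc_of_le hab, mul_comm, ← Real.norm_eq_abs]
  exact norm_setIntegral_le_of_norm_le_const measure_Icc_lt_top fun t _ =>
    (Real.norm_eq_abs _).trans_le (hK t)

variable [SFinite μ] (hw : Integrable w μ) (hF : Measurable F) (hF01 : ∀ z, F z ∈ Icc 0 1)
  (hK : ∀ v, |∫ z in F ⁻¹' Iic v, w z ∂μ| ≤ K)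
include hw hF hF01 hK

lemma abs_integral_mul_comp_sub_le_of_monotoneOn {u : ℝ → ℝ} (hu : MonotoneOn u (Icc 0 1)) :
    |∫ z, w z * u (F z) ∂μ - u 1 * ∫ z, w z ∂μ| ≤ (u 1 - u 0) * K := by
  have h0 : (0 : ℝ) ∈ Icc 0 1 := left_mem_Icc.mpr zero_le_one
  have h1 : (1 : ℝ) ∈ Icc 0 1 := right_mem_Icc.mpr zero_le_one
  refine abs_integral_mul_sub_le_of_abs_setIntegral_sublevel_le hw (hu.measurable_comp hF hF01)
    (hu h0 h1 zero_le_one) (fun z => hu.mapsTo_Icc (hF01 z)) fun t => ?_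
  rw [show {z | u (F z) ≤ t} = _ from preimage_Iic_comp_eq_preimage_lowerClosure hu hF01 t]
  exact abs_setIntegral_preimage_le_of_isLowerSet hw hF (fun z => (hF01 z).2) hK
    (lowerClosure _).lower

lemma abs_integral_mul_comp_le_of_boundedVariationOn {φ : ℝ → ℝ}
    (hφ : BoundedVariationOn φ (Icc 0 1)) :
    |∫ z, w z * φ (F z) ∂μ| ≤ (3 * (eVariationOn φ (Icc 0 1)).toReal + |φ 1|) * K := by
  -- Jordan decomposition `φ = P - (P - φ)` with `P` the variation of `φ` on `[0, ·]`.
  set V := (eVariationOn φ (Icc 0 1)).toReal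
  have h0 : (0 : ℝ) ∈ Icc 0 1 := left_mem_Icc.mpr zero_le_one
  have h1 : (1 : ℝ) ∈ Icc 0 1 := right_mem_Icc.mpr zero_le_one
  have hP := variationOnFromTo.monotoneOn hφ.locallyBoundedVariationOn h0
  have hQ := variationOnFromTo.sub_self_monotoneOn hφ.locallyBoundedVariationOn h0
  have hP0 : variationOnFromTo φ (Icc 0 1) 0 0 = 0 := variationOnFromTo.self φ _ 0
  have hP1 : variationOnFromTo φ (Icc 0 1) 0 1 = V := by
    rw [variationOnFromTo.eq_of_le φ _ zero_le_one, inter_self]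
  set P := variationOnFromTo φ (Icc 0 1) 0
  have hφ01 : φ 0 - φ 1 ≤ V := hφ.sub_le h0 h1
  have hK0 : 0 ≤ K := (abs_nonneg _).trans (hK 0)
  have hwK : |∫ z, w z ∂μ| ≤ K := by
    have huniv : F ⁻¹' Iic 1 = univ := eq_univ_of_forall fun z => (hF01 z).2
    simpa [huniv] using hK 1
  have hint : ∀ {u : ℝ → ℝ}, MonotoneOn u (Icc 0 1) → Integrable (fun z => w z * u (F z)) μ :=
    fun hu => hw.mul_of_forall_mem_Icc (hu.measurable_comp hF hF01).aestronglyMeasurable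
      fun z => hu.mapsTo_Icc (hF01 z)
  have hsplit : ∫ z, w z * φ (F z) ∂μ =
      (∫ z, w z * P (F z) ∂μ - P 1 * ∫ z, w z ∂μ) -
        (∫ z, w z * (P - φ) (F z) ∂μ - (P - φ) 1 * ∫ z, w z ∂μ) + φ 1 * ∫ z, w z ∂μ := by
    have hdiff : ∫ z, w z * φ (F z) ∂μ = ∫ z, w z * P (F z) ∂μ - ∫ z, w z * (P - φ) (F z) ∂μ := by
      rw [← integral_sub (hint hP) (hint hQ)]
      congr 1 with z
      simp only [Pi.sub_apply]
      ring
    rw [hdiff, Pi.sub_apply]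
    ring
  have hPF : |∫ z, w z * P (F z) ∂μ - P 1 * ∫ z, w z ∂μ| ≤ V * K := by
    simpa only [hP0, hP1, sub_zero] using
      abs_integral_mul_comp_sub_le_of_monotoneOn hw hF hF01 hK hP
  have hQF : |∫ z, w z * (P - φ) (F z) ∂μ - (P - φ) 1 * ∫ z, w z ∂μ| ≤ (2 * V) * K := by
    refine (abs_integral_mul_comp_sub_le_of_monotoneOn hw hF hF01 hK hQ).trans ?_
    simp only [Pi.sub_apply, hP0, hP1]
    gcongr
    linarith
  rw [hsplit]
  calc _ ≤ |∫ z, w z * P (F z) ∂μ - P 1 * ∫ z, w z ∂μ| +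
        |∫ z, w z * (P - φ) (F z) ∂μ - (P - φ) 1 * ∫ z, w z ∂μ| + |φ 1| * |∫ z, w z ∂μ| := by
        rw [← abs_mul]
        exact (abs_add_le _ _).trans (by gcongr; exact abs_sub _ _)
    _ ≤ V * K + (2 * V) * K + |φ 1| * K := by gcongr
    _ = (3 * V + |φ 1|) * K := by ring

end ThresholdBounds

lemma abs_lab_sub_le_one (y : Bool) {q : ℝ} (hq : q ∈ Icc 0 1) : |lab y - q| ≤ 1 := by
  obtain ⟨hq0, hq1⟩ := hq
  cases y <;> rw [abs_le] <;> constructor <;> simp [lab] <;> linarith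

lemma integrable_lab_sub {X : Type*} [MeasurableSpace X] (μ : Measure (X × Bool))
    [IsFiniteMeasure μ] {p : X → ℝ} (hp : Measurable p) (hp01 : ∀ x, p x ∈ Icc 0 1) :
    Integrable (fun z : X × Bool => lab z.2 - p z.1) μ :=
  .of_bound (((Measurable.of_discrete (f := lab)).comp measurable_snd).sub
    (hp.comp measurable_fst)).aestronglyMeasurable 1
    (ae_of_all _ fun z => (Real.norm_eq_abs _).trans_le (abs_lab_sub_le_one z.2 (hp01 z.1)))

theorem stmt2_general {X : Type*} [MeasurableSpace X]
    (D : Measure (X × Bool))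
    (ε : ℝ) (hε : 0 < ε)
    (ℓ : ℝ → Bool → ℝ)
    (hLbdd : ∀ q ∈ Icc (0:ℝ) 1, ∀ y : Bool, ℓ q y ∈ Icc (-1:ℝ) 1)
    (hLBV : ∀ y : Bool, ∀ S ∈ partitionSums (fun q => ℓ q y), S ≤ 1)
    (p : X → ℝ) (hpmeas : Measurable p) (hprange : ∀ x, p x ∈ Icc (0:ℝ) 1)
    (f : X → ℝ) (hfmeas : Measurable f) (hfrange : ∀ x, f x ∈ Icc (0:ℝ) 1)
    (g : X → Bool) (hgpos : 0 < Pg D g) :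
    |condE D g (fun z => (lab z.2 - p z.1) * (ℓ (f z.1) true - ℓ (f z.1) false))| ≤
      9 * sSup ((fun v =>
          |condE D g (fun z => (lab z.2 - p z.1) * (if f z.1 ≤ v then 1 else 0))|) ''
          Icc (0:ℝ) 1) +
        ε * Real.sqrt (1 / Pg D g) := by
  obtain ⟨hG0, hGtop⟩ := ENNReal.toReal_pos_iff.mp hgpos
  have := cond_isProbabilityMeasure_of_finite hG0.ne' hGtop.ne
  set μ := D[|{z : X × Bool | g z.1 = true}]
  set w : X × Bool → ℝ := fun z => lab z.2 - p z.1
  set F : X × Bool → ℝ := fun z => f z.1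
  have hF : Measurable F := hfmeas.comp measurable_fst
  have hF01 : ∀ z, F z ∈ Icc 0 1 := fun z => hfrange z.1
  have hw : Integrable w μ := integrable_lab_sub μ hpmeas hprange
  have hthreshold : (fun v => |condE D g (fun z => w z * (if F z ≤ v then 1 else 0))|) =
      fun v => |∫ z in F ⁻¹' Iic v, w z ∂μ| :=
    funext fun v => by rw [condE, integral_mul_ite_le_eq_setIntegral hF]
  have hK := abs_setIntegral_preimage_Iic_le_sSup hw hF01
  have hvar : eVariationOn (fun q => ℓ q true - ℓ q false) (Icc 0 1) ≤ ENNReal.ofReal (1 + 1) :=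
    eVariationOn_Icc_le_of_partitionSums_le (partitionSums_sub_le (hLBV true) (hLBV false))
  have hΔ1 : |ℓ 1 true - ℓ 1 false| ≤ 1 + 1 := (abs_sub _ _).trans <| add_le_add
    (abs_le.mpr (hLbdd 1 (right_mem_Icc.mpr zero_le_one) true))
    (abs_le.mpr (hLbdd 1 (right_mem_Icc.mpr zero_le_one) false))
  have hmain := abs_integral_mul_comp_le_of_boundedVariationOn hw hF hF01 hK
    (ne_top_of_le_ne_top ENNReal.ofReal_ne_top hvar)
  have hK0 := (abs_nonneg _).trans (hK 0)
  rw [hthreshold]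
  calc _ ≤ (3 * (1 + 1) + (1 + 1)) * _ :=
        hmain.trans (by gcongr; exact ENNReal.toReal_le_of_le_ofReal (by norm_num) hvar)
    _ ≤ _ := by nlinarith [mul_nonneg hε.le (Real.sqrt_nonneg (1 / Pg D g))]

/-- Approximation lemma: for any bounded-variation loss `ℓ`, predictor
`p⋆`, measurable `f`, group `g` with `P_g > 0`, and `ε > 0`,
`|E[(y - p⋆(x))·Δℓ(f(x)) | g(x)=1]| ≤ 9·sup_v |E[(y - p⋆(x))·1[f(x) ≤ v] | g(x)=1]|
  + ε·√(1/P_g)`. -/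
theorem stmt2 {X : Type*} [MeasurableSpace X]
    (D : Measure (X × Bool)) [IsProbabilityMeasure D]
    (ε : ℝ) (hε : 0 < ε)
    (ℓ : ℝ → Bool → ℝ)
    (hLmeas : ∀ y : Bool, Measurable (fun q => ℓ q y))
    (hLbdd : ∀ q ∈ Icc (0:ℝ) 1, ∀ y : Bool, ℓ q y ∈ Icc (-1:ℝ) 1)
    (hLBV : ∀ y : Bool, ∀ S ∈ partitionSums (fun q => ℓ q y), S ≤ 1)
    (p : X → ℝ) (hpmeas : Measurable p) (hprange : ∀ x, p x ∈ Icc (0:ℝ) 1)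
    (f : X → ℝ) (hfmeas : Measurable f) (hfrange : ∀ x, f x ∈ Icc (0:ℝ) 1)
    (g : X → Bool) (hgmeas : Measurable g) (hgpos : 0 < Pg D g) :
    |condE D g (fun z => (lab z.2 - p z.1) * (ℓ (f z.1) true - ℓ (f z.1) false))| ≤
      9 * sSup ((fun v =>
          |condE D g (fun z => (lab z.2 - p z.1) * (if f z.1 ≤ v then 1 else 0))|) ''
          Icc (0:ℝ) 1) +
        ε * Real.sqrt (1 / Pg D g) :=
  stmt2_general D ε hε ℓ hLbdd hLBV p hpmeas hprange f hfmeas hfrange g hgpos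

end
end

section
/- Let H be a nonempty hypothesis class and G a nonempty set of groups, each with P_g > 0. The minimax value of the step-calibration multi-objective game is zero: inf_{p ∈ P} sup_{σ,v,w,h,g} E_{(x,y)~D}[ℓ_{σ,v,w,h,g}(p,(x,y))] = 0. In particular, for every p ∈ P the supremum over objectives is nonnegative, and any measurable [0,1]-valued version p̄ of the conditional expectation x ↦ E_D[y | x] satisfies E_{(x,y)~D}[ℓ_{σ,v,w,h,g}(p̄,(x,y))] = 0 for every σ, v, w, h, g. -/
open MeasureTheory ProbabilityTheory Set

noncomputable section

/-- The step-calibration objective `ℓ_{σ,v,w,h,g}` evaluated (in expectation over `D`)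
at the predictor `p`. -/
def objective {X : Type*} [MeasurableSpace X] (D : Measure (X × Bool))
    (σ v w : ℝ) (h : X → ℝ) (g : X → Bool) (p : X → ℝ) : ℝ :=
  ∫ z, σ * (lab z.2 - p z.1) / Real.sqrt (Pg D g) * (if p z.1 ≤ v then 1 else 0) *
      (if h z.1 ≤ w then 1 else 0) * (if g z.1 = true then 1 else 0) ∂D

/-- The worst-case (supremum) objective value of a predictor `p` over all
`σ ∈ {+1,-1}`, `v, w ∈ [0,1]`, `h ∈ H`, `g ∈ G`. -/
def supObj {X : Type*} [MeasurableSpace X] (D : Measure (X × Bool))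
    (G : Set (X → Bool)) (H : Set (X → ℝ)) (p : X → ℝ) : ℝ :=
  sSup {r | ∃ σ ∈ ({1, -1} : Set ℝ), ∃ v ∈ Icc (0:ℝ) 1, ∃ w ∈ Icc (0:ℝ) 1,
    ∃ h ∈ H, ∃ g ∈ G, r = objective D σ v w h g p}


/-! The Bayes predictor `p̄` is calibrated on every measurable set of contexts, and each
objective is, up to the factor `σ / √P_g`, the calibration error of the predictor on the
level set `{p ≤ v, h ≤ w, g = 1}`; so every objective of `p̄` vanishes. On the other hand the
objectives come in pairs `±ℓ`, so the worst case of any predictor is nonnegative. -/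

lemma lab_snd_eq_indicator {α : Type*} :
    (fun z : α × Bool => lab z.2) = {z | z.2 = true}.indicator fun _ => 1 := by
  funext ⟨x, y⟩
  cases y <;> simp [lab]

lemma measurableSet_snd_eq_true {α : Type*} [MeasurableSpace α] :
    MeasurableSet {z : α × Bool | z.2 = true} :=
  measurable_snd (measurableSet_singleton true)

section StepCalibration

variable {X : Type*} [MeasurableSpace X] (D : Measure (X × Bool))

lemma setIntegral_lab (s : Set (X × Bool)) :
    ∫ z in s, lab z.2 ∂D = D.real (s ∩ {z | z.2 = true}) := by
  rw [lab_snd_eq_indicator, setIntegral_indicator measurableSet_snd_eq_true, setIntegral_const,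
    smul_eq_mul, mul_one]

lemma setIntegral_lab_sub_eq_zero [IsFiniteMeasure D] {pbar : X → ℝ} (hmeas : Measurable pbar)
    (hrange : ∀ x, pbar x ∈ Icc (0:ℝ) 1)
    (hpbar : ∀ A : Set X, MeasurableSet A →
      ∫ z in {z : X × Bool | z.1 ∈ A}, pbar z.1 ∂D =
        (D {z : X × Bool | z.1 ∈ A ∧ z.2 = true}).toReal)
    {A : Set X} (hA : MeasurableSet A) :
    ∫ z in {z : X × Bool | z.1 ∈ A}, (lab z.2 - pbar z.1) ∂D = 0 := by
  have hlab : Integrable (fun z : X × Bool => lab z.2) (D.restrict {z | z.1 ∈ A}) := by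
    rw [lab_snd_eq_indicator]
    exact (integrable_const 1).indicator measurableSet_snd_eq_true
  have hpbar_int : Integrable (fun z : X × Bool => pbar z.1) (D.restrict {z | z.1 ∈ A}) :=
    .of_bound (hmeas.comp measurable_fst).aestronglyMeasurable 1 <| .of_forall fun z => by
      rw [Real.norm_eq_abs, abs_le]
      constructor <;> linarith [(hrange z.1).1, (hrange z.1).2]
  rw [integral_sub hlab hpbar_int, setIntegral_lab, hpbar A hA, measureReal_def]
  exact sub_self _

omit D in
lemma measurableSet_stepRegion {p h : X → ℝ} {g : X → Bool} (hp : Measurable p)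
    (hh : Measurable h) (hg : Measurable g) (v w : ℝ) :
    MeasurableSet {x | p x ≤ v ∧ h x ≤ w ∧ g x = true} :=
  (measurableSet_le hp measurable_const).inter
    ((measurableSet_le hh measurable_const).inter (hg (measurableSet_singleton true)))

lemma objective_eq_mul_setIntegral {p h : X → ℝ} {g : X → Bool} (hp : Measurable p)
    (hh : Measurable h) (hg : Measurable g) (σ v w : ℝ) :
    objective D σ v w h g p = σ / √(Pg D g) *
      ∫ z in {z : X × Bool | z.1 ∈ {x | p x ≤ v ∧ h x ≤ w ∧ g x = true}},
        (lab z.2 - p z.1) ∂D := by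
  have hS : MeasurableSet {z : X × Bool | z.1 ∈ {x | p x ≤ v ∧ h x ≤ w ∧ g x = true}} :=
    measurable_fst (measurableSet_stepRegion hp hh hg v w)
  rw [← integral_const_mul, objective, ← integral_indicator hS]
  congr 1
  funext z
  simp only [indicator, mem_ofPred_eq]
  split_ifs <;> simp_all
  ring

lemma objective_neg (σ v w : ℝ) (h : X → ℝ) (g : X → Bool) (p : X → ℝ) :
    objective D (-σ) v w h g p = -objective D σ v w h g p := by
  rw [objective, objective, ← integral_neg]
  congr 1
  funext z
  ring

lemma supObj_nonneg {G : Set (X → Bool)} {H : Set (X → ℝ)} (hG : G.Nonempty) (hH : H.Nonempty)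
    (p : X → ℝ) : 0 ≤ supObj D G H p := by
  obtain ⟨g, hg⟩ := hG
  obtain ⟨h, hh⟩ := hH
  have mem : ∀ σ ∈ ({1, -1} : Set ℝ), objective D σ 0 1 h g p ∈
      {r | ∃ σ ∈ ({1, -1} : Set ℝ), ∃ v ∈ Icc (0:ℝ) 1, ∃ w ∈ Icc (0:ℝ) 1,
        ∃ h ∈ H, ∃ g ∈ G, r = objective D σ v w h g p} := fun σ hσ =>
    ⟨σ, hσ, 0, by simp, 1, by simp, h, hh, g, hg, rfl⟩
  apply Real.sSup_nonneg'
  rcases le_total 0 (objective D 1 0 1 h g p) with hpos | hneg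
  · exact ⟨_, mem 1 (by simp), hpos⟩
  · exact ⟨_, mem (-1) (by simp), by rw [objective_neg]; linarith⟩

lemma supObj_eq_zero {G : Set (X → Bool)} {H : Set (X → ℝ)} (hG : G.Nonempty) (hH : H.Nonempty)
    {p : X → ℝ} (hp : ∀ σ ∈ ({1, -1} : Set ℝ), ∀ v ∈ Icc (0:ℝ) 1, ∀ w ∈ Icc (0:ℝ) 1,
      ∀ h ∈ H, ∀ g ∈ G, objective D σ v w h g p = 0) :
    supObj D G H p = 0 := by
  obtain ⟨g, hg⟩ := hG
  obtain ⟨h, hh⟩ := hH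
  refine (congrArg sSup (eq_singleton_iff_unique_mem.mpr ⟨?_, ?_⟩)).trans (csSup_singleton 0)
  · refine ⟨1, by simp, 0, by simp, 1, by simp, h, hh, g, hg, ?_⟩
    exact (hp 1 (by simp) 0 (by simp) 1 (by simp) h hh g hg).symm
  · rintro r ⟨σ, hσ, v, hv, w, hw, h', hh', g', hg', rfl⟩
    exact hp σ hσ v hv w hw h' hh' g' hg'

end StepCalibration

theorem stmt6_general {X : Type*} [MeasurableSpace X]
    (D : Measure (X × Bool)) [IsProbabilityMeasure D]
    (G : Set (X → Bool)) (hGne : G.Nonempty) (hGmeas : ∀ g ∈ G, Measurable g)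
    (H : Set (X → ℝ)) (hHne : H.Nonempty) (hHmeas : ∀ h ∈ H, Measurable h)
    -- p̄ is a measurable [0,1]-valued version of x ↦ E[y | x]:
    -- for every measurable A ⊆ X, ∫_{x ∈ A} p̄(x) dD = D(A × {1})
    (pbar : X → ℝ) (hpbarmeas : Measurable pbar) (hpbarrange : ∀ x, pbar x ∈ Icc (0:ℝ) 1)
    (hpbar : ∀ A : Set X, MeasurableSet A →
      ∫ z in {z : X × Bool | z.1 ∈ A}, pbar z.1 ∂D =
        (D {z : X × Bool | z.1 ∈ A ∧ z.2 = true}).toReal) :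
    -- (a) the minimax value of the game is zero
    sInf {r | ∃ q : X → ℝ, Measurable q ∧ (∀ x, q x ∈ Icc (0:ℝ) 1) ∧
        r = supObj D G H q} = 0 ∧
    -- (b) every measurable predictor into [0,1] has nonnegative worst-case objective
    (∀ q : X → ℝ, Measurable q → (∀ x, q x ∈ Icc (0:ℝ) 1) → 0 ≤ supObj D G H q) ∧
    -- (c) the Bayes predictor p̄ makes every objective vanish
    (∀ σ ∈ ({1, -1} : Set ℝ), ∀ v ∈ Icc (0:ℝ) 1, ∀ w ∈ Icc (0:ℝ) 1, ∀ h ∈ H, ∀ g ∈ G,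
      objective D σ v w h g pbar = 0) := by
  have bayes : ∀ σ ∈ ({1, -1} : Set ℝ), ∀ v ∈ Icc (0:ℝ) 1, ∀ w ∈ Icc (0:ℝ) 1, ∀ h ∈ H,
      ∀ g ∈ G, objective D σ v w h g pbar = 0 := by
    intro σ _ v _ w _ h hh g hg
    rw [objective_eq_mul_setIntegral D hpbarmeas (hHmeas h hh) (hGmeas g hg),
      setIntegral_lab_sub_eq_zero D hpbarmeas hpbarrange hpbar
        (measurableSet_stepRegion hpbarmeas (hHmeas h hh) (hGmeas g hg) v w), mul_zero]
  have minimax : IsLeast {r | ∃ q : X → ℝ, Measurable q ∧ (∀ x, q x ∈ Icc (0:ℝ) 1) ∧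
      r = supObj D G H q} 0 :=
    ⟨⟨pbar, hpbarmeas, hpbarrange, (supObj_eq_zero D hGne hHne bayes).symm⟩,
      fun _ ⟨q, _, _, hr⟩ => hr ▸ supObj_nonneg D hGne hHne q⟩
  exact ⟨minimax.csInf_eq, fun q _ _ => supObj_nonneg D hGne hHne q, bayes⟩

/-- The minimax value of the step-calibration multi-objective game is
zero; every predictor has nonnegative worst-case objective; and any measurable
`[0,1]`-valued version `p̄` of the conditional expectation `x ↦ E[y | x]` makes every
objective vanish. -/
theorem stmt6 {X : Type*} [MeasurableSpace X]
    (D : Measure (X × Bool)) [IsProbabilityMeasure D]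
    (G : Set (X → Bool)) (hGne : G.Nonempty) (hGmeas : ∀ g ∈ G, Measurable g)
    (hGpos : ∀ g ∈ G, 0 < Pg D g)
    (H : Set (X → ℝ)) (hHne : H.Nonempty) (hHmeas : ∀ h ∈ H, Measurable h)
    (hHrange : ∀ h ∈ H, ∀ x, h x ∈ Icc (0:ℝ) 1)
    -- p̄ is a measurable [0,1]-valued version of x ↦ E[y | x]:
    -- for every measurable A ⊆ X, ∫_{x ∈ A} p̄(x) dD = D(A × {1})
    (pbar : X → ℝ) (hpbarmeas : Measurable pbar) (hpbarrange : ∀ x, pbar x ∈ Icc (0:ℝ) 1)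
    (hpbar : ∀ A : Set X, MeasurableSet A →
      ∫ z in {z : X × Bool | z.1 ∈ A}, pbar z.1 ∂D =
        (D {z : X × Bool | z.1 ∈ A ∧ z.2 = true}).toReal) :
    -- (a) the minimax value of the game is zero
    sInf {r | ∃ q : X → ℝ, Measurable q ∧ (∀ x, q x ∈ Icc (0:ℝ) 1) ∧
        r = supObj D G H q} = 0 ∧
    -- (b) every measurable predictor into [0,1] has nonnegative worst-case objective
    (∀ q : X → ℝ, Measurable q → (∀ x, q x ∈ Icc (0:ℝ) 1) → 0 ≤ supObj D G H q) ∧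
    -- (c) the Bayes predictor p̄ makes every objective vanish
    (∀ σ ∈ ({1, -1} : Set ℝ), ∀ v ∈ Icc (0:ℝ) 1, ∀ w ∈ Icc (0:ℝ) 1, ∀ h ∈ H, ∀ g ∈ G,
      objective D σ v w h g pbar = 0) :=
  stmt6_general D G hGne hGmeas H hHne hHmeas pbar hpbarmeas hpbarrange hpbar
end
end

section
/- Let ε > 0, let L be a class of losses ℓ: [0,1] × {0,1} → [−1,1] each of bounded variation (L ⊆ L_BV), let G be a set of groups each with P_g > 0, and let H be a nonempty hypothesis class. If a randomized predictor ((Ω,π), p) is randomized (G,H,ε)-step calibrated, then it is a randomized (L,G,H,20ε)-panpredictor; that is, randomized step calibration implies randomized panprediction with error degraded only by a universal constant factor (one may take the constant 20). -/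
/-!
Write `a = y - p`. For every prediction `r`, `ℓ(r, y) = E_{y' ~ Ber(p)} ℓ(r, y') + a · ψ(r)` with
`ψ = ℓ(·, 1) - ℓ(·, 0)`. The post-processing `k_ℓ` minimises the first term pointwise, so
`k_ℓ ∘ p` loses against `h` by at most `|E[a · ψ(k_ℓ(p))]| + |E[a · ψ(h)]|`. Optimality of `k_ℓ`
makes `ψ ∘ k_ℓ` antitone, and `ψ` has variation at most `2`, hence is a difference of antitone
functions. For antitone `R`, the layer-cake formula writes `E[a · R(t)]` as an average of
`E[a · 1[t ∈ S]]` over lower sets `S`, and the indicator of a lower set is a step `1[t ≤ w]` or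
a limit of such steps, which step calibration controls. The resulting constant is `6 + 4 = 10`.
-/

open MeasureTheory ProbabilityTheory Set

noncomputable section

/-- Joint conditional expectation for a randomized predictor: `F` is averaged over
`ω ~ π` drawn independently of `(x, y) ~ D`, conditioned on `g x = true`. -/
def condER {Ω X : Type*} [MeasurableSpace Ω] [MeasurableSpace X]
    (π : Measure Ω) (D : Measure (X × Bool)) (g : X → Bool)
    (F : Ω × (X × Bool) → ℝ) : ℝ :=
  ∫ u, F u ∂((π.prod D)[|{u : Ω × (X × Bool) | g u.2.1 = true}])

section Variation

variable {f : ℝ → ℝ} {s s' t S V : ℝ}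

def partitionSumsUpTo (f : ℝ → ℝ) (t : ℝ) : Set ℝ :=
  {S | ∃ (m : ℕ) (z : ℕ → ℝ), z 0 = 0 ∧ z m = t ∧ (∀ i < m, z i < z (i + 1)) ∧
      S = ∑ i ∈ Finset.range m, |f (z (i + 1)) - f (z i)|}

theorem partitionSumsUpTo_one (f : ℝ → ℝ) : partitionSumsUpTo f 1 = partitionSums f := rfl

theorem zero_mem_partitionSumsUpTo_zero (f : ℝ → ℝ) : 0 ∈ partitionSumsUpTo f 0 :=
  ⟨0, fun _ => 0, rfl, rfl, by simp, by simp⟩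

theorem nonneg_of_mem_partitionSumsUpTo (hS : S ∈ partitionSumsUpTo f t) : 0 ≤ S := by
  obtain ⟨m, z, -, -, -, rfl⟩ := hS
  exact Finset.sum_nonneg fun i _ => abs_nonneg _

theorem add_abs_sub_mem_partitionSumsUpTo (hss' : s < s') (hS : S ∈ partitionSumsUpTo f s) :
    S + |f s' - f s| ∈ partitionSumsUpTo f s' := by
  obtain ⟨m, z, hz0, hzm, hz, rfl⟩ := hS
  refine ⟨m + 1, fun i => if i ≤ m then z i else s', by simp [hz0], by simp, ?_, ?_⟩
  · intro i hi
    rcases (Nat.lt_succ_iff.mp hi).lt_or_eq with hi | rfl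
    · simpa [hi.le, Nat.succ_le_of_lt hi] using hz i hi
    · simpa [hzm] using hss'
  · rw [Finset.sum_range_succ]
    refine congrArg₂ _ (Finset.sum_congr rfl fun i hi => ?_) (by simp [hzm])
    have hi := Finset.mem_range.mp hi
    simp [hi.le, Nat.succ_le_of_lt hi]

theorem partitionSumsUpTo_nonempty (ht : 0 ≤ t) : (partitionSumsUpTo f t).Nonempty := by
  rcases ht.eq_or_lt with rfl | ht
  · exact ⟨0, zero_mem_partitionSumsUpTo_zero f⟩
  · exact ⟨_, add_abs_sub_mem_partitionSumsUpTo ht (zero_mem_partitionSumsUpTo_zero f)⟩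

theorem le_of_mem_partitionSumsUpTo (hV : ∀ S ∈ partitionSums f, S ≤ V) (ht : t ≤ 1)
    (hS : S ∈ partitionSumsUpTo f t) : S ≤ V := by
  rcases ht.eq_or_lt with rfl | ht
  · exact hV S (partitionSumsUpTo_one f ▸ hS)
  · linarith [hV _ (add_abs_sub_mem_partitionSumsUpTo ht hS), abs_nonneg (f 1 - f t)]

theorem partitionSums_sub_le_s9 {g : ℝ → ℝ} {A B : ℝ} (hf : ∀ S ∈ partitionSums f, S ≤ A)
    (hg : ∀ S ∈ partitionSums g, S ≤ B) : ∀ S ∈ partitionSums (f - g), S ≤ A + B := by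
  rintro _ ⟨m, z, hz0, hzm, hz, rfl⟩
  calc ∑ i ∈ Finset.range m, |(f - g) (z (i + 1)) - (f - g) (z i)|
      ≤ ∑ i ∈ Finset.range m, (|f (z (i + 1)) - f (z i)| + |g (z (i + 1)) - g (z i)|) :=
        Finset.sum_le_sum fun i _ => by
          simpa only [Pi.sub_apply, sub_sub_sub_comm] using abs_sub _ _
    _ ≤ A + B := by
        rw [Finset.sum_add_distrib]
        exact add_le_add (hf _ ⟨m, z, hz0, hzm, hz, rfl⟩) (hg _ ⟨m, z, hz0, hzm, hz, rfl⟩)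

def variationUpTo (f : ℝ → ℝ) (t : ℝ) : ℝ := sSup (partitionSumsUpTo f t)

theorem bddAbove_partitionSumsUpTo (hV : ∀ S ∈ partitionSums f, S ≤ V) (ht : t ≤ 1) :
    BddAbove (partitionSumsUpTo f t) :=
  ⟨V, fun _ => le_of_mem_partitionSumsUpTo hV ht⟩

theorem variationUpTo_nonneg (f : ℝ → ℝ) (t : ℝ) : 0 ≤ variationUpTo f t :=
  Real.sSup_nonneg fun _ => nonneg_of_mem_partitionSumsUpTo

theorem variationUpTo_le (hV : ∀ S ∈ partitionSums f, S ≤ V) (ht : t ∈ Icc (0:ℝ) 1) :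
    variationUpTo f t ≤ V :=
  csSup_le (partitionSumsUpTo_nonempty ht.1) fun _ => le_of_mem_partitionSumsUpTo hV ht.2

theorem variationUpTo_add_abs_sub_le (hV : ∀ S ∈ partitionSums f, S ≤ V) (hs : 0 ≤ s)
    (hss' : s ≤ s') (hs' : s' ≤ 1) :
    variationUpTo f s + |f s' - f s| ≤ variationUpTo f s' := by
  rcases hss'.eq_or_lt with rfl | hlt
  · simp
  rw [← le_sub_iff_add_le]
  refine csSup_le (partitionSumsUpTo_nonempty hs) fun S hS => le_sub_iff_add_le.mpr ?_
  exact le_csSup (bddAbove_partitionSumsUpTo hV hs') (add_abs_sub_mem_partitionSumsUpTo hlt hS)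

theorem exists_antitoneOn_sub_antitoneOn (hV : ∀ S ∈ partitionSums f, S ≤ V) :
    ∃ P N : ℝ → ℝ, AntitoneOn P (Icc 0 1) ∧ AntitoneOn N (Icc 0 1) ∧ P 1 = 0 ∧ N 1 = 0 ∧
      P 0 + N 0 ≤ V ∧ ∀ s ∈ Icc (0:ℝ) 1, f s = f 1 + P s - N s := by
  set v := variationUpTo f
  have key : ∀ s ∈ Icc (0:ℝ) 1, ∀ s' ∈ Icc (0:ℝ) 1, s ≤ s' → |f s' - f s| ≤ v s' - v s :=
    fun s hs s' hs' hss' => by linarith [variationUpTo_add_abs_sub_le hV hs.1 hss' hs'.2]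
  refine ⟨fun s => (v 1 - v s + f s - f 1) / 2, fun s => (v 1 - v s - f s + f 1) / 2,
    fun s hs s' hs' hss' => ?_, fun s hs s' hs' hss' => ?_, by simp, by simp, ?_,
    fun s _ => by ring⟩
  · dsimp only
    linarith [(abs_le.mp (key s hs s' hs' hss')).2]
  · dsimp only
    linarith [(abs_le.mp (key s hs s' hs' hss')).1]
  · linarith [variationUpTo_nonneg f 0, variationUpTo_le hV (right_mem_Icc.mpr zero_le_one)]

end Variation

section LayerCake

variable {U : Type*} [MeasurableSpace U] {μ : Measure U} [IsFiniteMeasure μ] {a f : U → ℝ}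
  {c M : ℝ}

theorem abs_integral_mul_le_of_abs_setIntegral_superlevel_le (ha : Integrable a μ)
    (hf : Measurable f) (hM : 0 ≤ M) (hfM : ∀ u, f u ∈ Icc 0 M)
    (hc : ∀ s, |∫ u in {u | s < f u}, a u ∂μ| ≤ c) :
    |∫ u, a u * f u ∂μ| ≤ M * c := by
  set ν := volume.restrict (Ioc (0:ℝ) M)
  set F : U → ℝ → ℝ := fun u s => if s < f u then a u else 0
  have hF : Integrable (Function.uncurry F) (μ.prod ν) := by
    have : Function.uncurry F = {z : U × ℝ | z.2 < f z.1}.indicator fun z => a z.1 := by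
      ext ⟨u, s⟩; simp [F, indicator_apply]
    rw [this]
    exact (ha.comp_fst ν).indicator (measurableSet_lt measurable_snd (hf.comp measurable_fst))
  have hlayer : ∀ u, ∫ s, F u s ∂ν = a u * f u := fun u => by
    have hset : Iio (f u) ∩ Ioc 0 M = Ioo 0 (f u) := by
      ext s; simp only [mem_inter_iff, mem_Iio, mem_Ioc, mem_Ioo]
      constructor
      · rintro ⟨h1, h2, -⟩; exact ⟨h2, h1⟩
      · rintro ⟨h1, h2⟩; exact ⟨h2, h1, h2.le.trans (hfM u).2⟩
    have : F u = (Iio (f u)).indicator fun _ => a u := by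
      ext s; simp [F, indicator_apply]
    rw [this, integral_indicator_const _ measurableSet_Iio, measureReal_restrict_apply
      measurableSet_Iio, hset, Real.volume_real_Ioo_of_le (hfM u).1, sub_zero, smul_eq_mul,
      mul_comm]
  have hslice : ∀ s, ∫ u, F u s ∂μ = ∫ u in {u | s < f u}, a u ∂μ := fun s => by
    rw [← integral_indicator (measurableSet_lt measurable_const hf)]
    simp [F, indicator_apply]
  calc |∫ u, a u * f u ∂μ| = ‖∫ s, ∫ u, F u s ∂μ ∂ν‖ := by
        simp_rw [← hlayer, integral_integral_swap hF, Real.norm_eq_abs]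
    _ ≤ c * ν.real univ :=
        norm_integral_le_of_norm_le_const (ae_of_all _ fun s => by
          simpa only [hslice, Real.norm_eq_abs] using hc s)
    _ = M * c := by
        rw [measureReal_restrict_apply MeasurableSet.univ, univ_inter,
          Real.volume_real_Ioc_of_le hM, sub_zero, mul_comm]

end LayerCake

theorem AntitoneOn.antitone_comp_projIcc {R : ℝ → ℝ} (hR : AntitoneOn R (Icc 0 1)) :
    Antitone fun s : ℝ => R (projIcc 0 1 zero_le_one s) :=
  fun x y hxy => hR (projIcc 0 1 zero_le_one x).2 (projIcc 0 1 zero_le_one y).2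
    (monotone_projIcc zero_le_one hxy)

section StepCalibration

variable {U : Type*} [MeasurableSpace U] {μ : Measure U} {a t : U → ℝ} {c : ℝ}

/-- With `a = y - p` this is step calibration in which only the threshold on `t` is active. -/
def StepCalibrated (μ : Measure U) (a t : U → ℝ) (c : ℝ) : Prop :=
  ∀ w ∈ Icc (0:ℝ) 1, |∫ u in t ⁻¹' Iic w, a u ∂μ| ≤ c

theorem measurable_comp_of_antitoneOn {R : ℝ → ℝ} (hR : AntitoneOn R (Icc 0 1))
    (htm : Measurable t) (ht : ∀ u, t u ∈ Icc (0:ℝ) 1) : Measurable fun u => R (t u) := by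
  convert hR.antitone_comp_projIcc.measurable.comp htm using 2 with u
  simp [projIcc_of_mem _ (ht u)]

theorem integrable_mul_comp_of_antitoneOn {R : ℝ → ℝ} (hR : AntitoneOn R (Icc 0 1))
    (ha : Integrable a μ) (htm : Measurable t) (ht : ∀ u, t u ∈ Icc (0:ℝ) 1) :
    Integrable (fun u => a u * R (t u)) μ := by
  refine ha.mul_bdd (measurable_comp_of_antitoneOn hR htm ht).aestronglyMeasurable
    (c := |R 0| + |R 1|) (ae_of_all _ fun u => ?_)
  have h0 := hR (left_mem_Icc.mpr zero_le_one) (ht u) (ht u).1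
  have h1 := hR (ht u) (right_mem_Icc.mpr zero_le_one) (ht u).2
  rw [Real.norm_eq_abs, abs_le]
  constructor <;> linarith [le_abs_self (R 0), neg_abs_le (R 1), abs_nonneg (R 0),
    abs_nonneg (R 1)]

theorem setIntegral_preimage_Iic_eq (htm : Measurable t) (w : ℝ) :
    ∫ u in t ⁻¹' Iic w, a u ∂μ = ∫ u, a u * (if t u ≤ w then 1 else 0) ∂μ := by
  rw [← integral_indicator (htm measurableSet_Iic)]
  congr 1 with u
  by_cases hu : t u ≤ w <;> simp [hu]

namespace StepCalibrated

theorem nonneg (h : StepCalibrated μ a t c) : 0 ≤ c :=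
  (abs_nonneg _).trans (h 0 (left_mem_Icc.mpr zero_le_one))

theorem abs_integral_le (h : StepCalibrated μ a t c) (ht : ∀ u, t u ∈ Icc (0:ℝ) 1) :
    |∫ u, a u ∂μ| ≤ c := by
  have : t ⁻¹' Iic 1 = univ := eq_univ_of_forall fun u => (ht u).2
  simpa [this] using h 1 (right_mem_Icc.mpr zero_le_one)

theorem abs_setIntegral_Iic_le (h : StepCalibrated μ a t c) (ht : ∀ u, t u ∈ Icc (0:ℝ) 1)
    (w : ℝ) : |∫ u in t ⁻¹' Iic w, a u ∂μ| ≤ c := by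
  rcases lt_or_ge w 0 with hw | hw
  · have : t ⁻¹' Iic w = ∅ :=
      eq_empty_of_forall_notMem fun u hu => (hw.trans_le (ht u).1).not_ge hu
    simpa [this] using h.nonneg
  rcases le_or_gt w 1 with hw1 | hw1
  · exact h w ⟨hw, hw1⟩
  · have : t ⁻¹' Iic w = t ⁻¹' Iic 1 := by
      ext u; simp [(ht u).2, (ht u).2.trans hw1.le]
    exact this ▸ h 1 (right_mem_Icc.mpr zero_le_one)

theorem abs_setIntegral_Iio_le (h : StepCalibrated μ a t c) (ha : Integrable a μ)
    (htm : Measurable t) (ht : ∀ u, t u ∈ Icc (0:ℝ) 1) (w : ℝ) :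
    |∫ u in t ⁻¹' Iio w, a u ∂μ| ≤ c := by
  obtain ⟨v, hv_mono, hv_lt, hv_lim⟩ := exists_seq_strictMono_tendsto w
  rw [← iUnion_Iic_eq_Iio_of_lt_of_tendsto hv_lt hv_lim, preimage_iUnion]
  refine le_of_tendsto' (tendsto_setIntegral_of_monotone (fun n => htm measurableSet_Iic)
    (fun m n hmn => preimage_mono (Iic_subset_Iic.mpr (hv_mono.monotone hmn)))
    ha.integrableOn).abs fun n => h.abs_setIntegral_Iic_le ht (v n)

theorem abs_setIntegral_lowerSet_le (h : StepCalibrated μ a t c) (ha : Integrable a μ)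
    (htm : Measurable t) (ht : ∀ u, t u ∈ Icc (0:ℝ) 1) {S : Set ℝ} (hS : IsLowerSet S) :
    |∫ u in t ⁻¹' S, a u ∂μ| ≤ c := by
  rcases (S ∩ Icc (0:ℝ) 1).eq_empty_or_nonempty with hempty | hne
  · have : t ⁻¹' S = ∅ := eq_empty_of_forall_notMem fun u hu =>
      hempty.subset ⟨hu, ht u⟩
    simpa [this] using h.nonneg
  set b := sSup (S ∩ Icc (0:ℝ) 1)
  have hle : ∀ u, t u ∈ S → t u ≤ b := fun u hu => le_csSup ⟨1, fun _ hs => hs.2.2⟩ ⟨hu, ht u⟩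
  by_cases hb : b ∈ S
  · have : t ⁻¹' S = t ⁻¹' Iic b := by
      ext u; exact ⟨hle u, fun hu => hS hu hb⟩
    exact this ▸ h.abs_setIntegral_Iic_le ht b
  · have : t ⁻¹' S = t ⁻¹' Iio b := by
      ext u
      refine ⟨fun hu => (hle u hu).lt_of_ne fun heq => hb (heq ▸ hu), fun hu => ?_⟩
      obtain ⟨s, hs, hus⟩ := exists_lt_of_lt_csSup hne hu
      exact hS hus.le hs.1
    exact this ▸ h.abs_setIntegral_Iio_le ha htm ht b

variable [IsFiniteMeasure μ]

theorem abs_integral_mul_comp_le_of_antitoneOn_of_nonneg (h : StepCalibrated μ a t c)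
    (ha : Integrable a μ) (htm : Measurable t) (ht : ∀ u, t u ∈ Icc (0:ℝ) 1) {R : ℝ → ℝ}
    (hR : AntitoneOn R (Icc 0 1)) (hR1 : 0 ≤ R 1) :
    |∫ u, a u * R (t u) ∂μ| ≤ R 0 * c := by
  have hR0 := hR (left_mem_Icc.mpr zero_le_one) (right_mem_Icc.mpr zero_le_one) zero_le_one
  refine abs_integral_mul_le_of_abs_setIntegral_superlevel_le ha
    (measurable_comp_of_antitoneOn hR htm ht) (hR1.trans hR0)
    (fun u => ⟨hR1.trans (hR (ht u) (right_mem_Icc.mpr zero_le_one) (ht u).2),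
      hR (left_mem_Icc.mpr zero_le_one) (ht u) (ht u).1⟩) fun s => ?_
  have hS : IsLowerSet {r : ℝ | s < R (projIcc 0 1 zero_le_one r)} :=
    fun _ _ hxy hx => hx.trans_le (hR.antitone_comp_projIcc hxy)
  have : {u | s < R (t u)} = t ⁻¹' {r : ℝ | s < R (projIcc 0 1 zero_le_one r)} := by
    ext u; simp [projIcc_of_mem _ (ht u)]
  exact this ▸ h.abs_setIntegral_lowerSet_le ha htm ht hS

theorem abs_integral_mul_comp_le_of_antitoneOn (h : StepCalibrated μ a t c)
    (ha : Integrable a μ) (htm : Measurable t) (ht : ∀ u, t u ∈ Icc (0:ℝ) 1) {R : ℝ → ℝ}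
    (hR : AntitoneOn R (Icc 0 1)) :
    |∫ u, a u * R (t u) ∂μ| ≤ (R 0 - R 1 + |R 1|) * c := by
  have hR' : AntitoneOn (fun s => R s - R 1) (Icc 0 1) :=
    fun _ hx _ hy hxy => sub_le_sub_right (hR hx hy hxy) _
  have hsplit : ∫ u, a u * R (t u) ∂μ = ∫ u, a u * (R (t u) - R 1) ∂μ + R 1 * ∫ u, a u ∂μ := by
    rw [← integral_const_mul, ← integral_add (integrable_mul_comp_of_antitoneOn hR' ha htm ht)
      (ha.const_mul _)]
    congr 1; ext u; ring
  calc |∫ u, a u * R (t u) ∂μ|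
      ≤ |∫ u, a u * (R (t u) - R 1) ∂μ| + |R 1| * |∫ u, a u ∂μ| := by
        rw [hsplit, ← abs_mul]; exact abs_add_le _ _
    _ ≤ (R 0 - R 1) * c + |R 1| * c := by
        gcongr
        · simpa using h.abs_integral_mul_comp_le_of_antitoneOn_of_nonneg ha htm ht hR'
            (by simp)
        · exact h.abs_integral_le ht
    _ = (R 0 - R 1 + |R 1|) * c := by ring

theorem abs_integral_mul_comp_le_of_partitionSums_le (h : StepCalibrated μ a t c)
    (ha : Integrable a μ) (htm : Measurable t) (ht : ∀ u, t u ∈ Icc (0:ℝ) 1) {R : ℝ → ℝ}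
    {V : ℝ} (hV : ∀ S ∈ partitionSums R, S ≤ V) :
    |∫ u, a u * R (t u) ∂μ| ≤ (V + |R 1|) * c := by
  obtain ⟨P, N, hP, hN, hP1, hN1, hPN, hR⟩ := exists_antitoneOn_sub_antitoneOn hV
  have hsplit : ∫ u, a u * R (t u) ∂μ =
      R 1 * ∫ u, a u ∂μ + ∫ u, a u * P (t u) ∂μ - ∫ u, a u * N (t u) ∂μ := by
    have hPi := integrable_mul_comp_of_antitoneOn hP ha htm ht
    have hNi := integrable_mul_comp_of_antitoneOn hN ha htm ht
    rw [integral_congr_ae (ae_of_all _ fun u => show a u * R (t u) =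
        R 1 * a u + a u * P (t u) - a u * N (t u) by rw [hR _ (ht u)]; ring),
      integral_sub (f := fun u => R 1 * a u + a u * P (t u)) ((ha.const_mul _).add hPi) hNi,
      integral_add (ha.const_mul _) hPi, integral_const_mul]
  have hPc := h.abs_integral_mul_comp_le_of_antitoneOn ha htm ht hP
  have hNc := h.abs_integral_mul_comp_le_of_antitoneOn ha htm ht hN
  rw [hP1, abs_zero, sub_zero, add_zero] at hPc
  rw [hN1, abs_zero, sub_zero, add_zero] at hNc
  calc |∫ u, a u * R (t u) ∂μ|
      ≤ |R 1| * |∫ u, a u ∂μ| + |∫ u, a u * P (t u) ∂μ| + |∫ u, a u * N (t u) ∂μ| := by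
        rw [hsplit, ← abs_mul]
        exact (abs_sub _ _).trans (add_le_add_left (abs_add_le _ _) _)
    _ ≤ |R 1| * c + P 0 * c + N 0 * c := by gcongr; exact h.abs_integral_le ht
    _ ≤ (V + |R 1|) * c := by nlinarith [h.nonneg]

end StepCalibrated

end StepCalibration

section Loss

@[simp] theorem lab_true : lab true = 1 := rfl

@[simp] theorem lab_false : lab false = 0 := rfl

def expectedLoss (ℓ : ℝ → Bool → ℝ) (q r : ℝ) : ℝ := q * ℓ r true + (1 - q) * ℓ r false

def lossGap (ℓ : ℝ → Bool → ℝ) (r : ℝ) : ℝ := ℓ r true - ℓ r false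

theorem abs_lab_sub_le (y : Bool) {q : ℝ} (hq : q ∈ Icc (0:ℝ) 1) : |lab y - q| ≤ 1 := by
  cases y <;> simp only [lab_true, lab_false] <;> rw [abs_le] <;> constructor <;>
    linarith [hq.1, hq.2]

variable {ℓ : ℝ → Bool → ℝ}

theorem loss_eq_expectedLoss_add (ℓ : ℝ → Bool → ℝ) (y : Bool) (q r : ℝ) :
    ℓ r y = expectedLoss ℓ q r + (lab y - q) * lossGap ℓ r := by
  cases y <;> simp only [expectedLoss, lossGap, lab_true, lab_false] <;> ring

theorem abs_lossGap_le (hℓ : ∀ r ∈ Icc (0:ℝ) 1, ∀ y, ℓ r y ∈ Icc (-1:ℝ) 1) {r : ℝ}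
    (hr : r ∈ Icc (0:ℝ) 1) : |lossGap ℓ r| ≤ 2 := by
  have h1 := hℓ r hr true
  have h0 := hℓ r hr false
  rw [lossGap, abs_le]
  constructor <;> linarith [h1.1, h1.2, h0.1, h0.2]

theorem antitoneOn_lossGap_comp {k : ℝ → ℝ} (hk : ∀ q ∈ Icc (0:ℝ) 1, k q ∈ Icc (0:ℝ) 1)
    (hkopt : ∀ q ∈ Icc (0:ℝ) 1, ∀ r ∈ Icc (0:ℝ) 1, expectedLoss ℓ q (k q) ≤ expectedLoss ℓ q r) :
    AntitoneOn (fun q => lossGap ℓ (k q)) (Icc 0 1) := by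
  intro q hq q' hq' hqq'
  have h := hkopt q hq (k q') (hk q' hq')
  have h' := hkopt q' hq' (k q) (hk q hq)
  simp only [expectedLoss] at h h'
  rcases hqq'.eq_or_lt with rfl | hlt
  · exact le_rfl
  · -- adding the two optimality inequalities gives `(q' - q) * (gap q' - gap q) ≤ 0`
    simp only [lossGap]
    nlinarith

variable {U : Type*} [MeasurableSpace U] {μ : Measure U} [IsFiniteMeasure μ] {y : U → Bool}
  {q s : U → ℝ}

theorem integrable_expectedLoss (hℓm : ∀ y, Measurable fun r => ℓ r y)
    (hℓ : ∀ r ∈ Icc (0:ℝ) 1, ∀ y, ℓ r y ∈ Icc (-1:ℝ) 1) (hqm : Measurable q)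
    (hq : ∀ u, q u ∈ Icc (0:ℝ) 1) (hsm : Measurable s) (hs : ∀ u, s u ∈ Icc (0:ℝ) 1) :
    Integrable (fun u => expectedLoss ℓ (q u) (s u)) μ := by
  refine .of_bound (by unfold expectedLoss; fun_prop) 1 (ae_of_all _ fun u => ?_)
  have h1 := hℓ _ (hs u) true
  have h0 := hℓ _ (hs u) false
  have hqu := hq u
  rw [Real.norm_eq_abs, abs_le, expectedLoss]
  constructor <;> nlinarith [h1.1, h1.2, h0.1, h0.2, hqu.1, hqu.2]

theorem integral_loss_eq_integral_expectedLoss_add (hℓm : ∀ y, Measurable fun r => ℓ r y)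
    (hℓ : ∀ r ∈ Icc (0:ℝ) 1, ∀ y, ℓ r y ∈ Icc (-1:ℝ) 1) (hym : Measurable y)
    (hqm : Measurable q) (hq : ∀ u, q u ∈ Icc (0:ℝ) 1) (hsm : Measurable s)
    (hs : ∀ u, s u ∈ Icc (0:ℝ) 1) :
    ∫ u, ℓ (s u) (y u) ∂μ = ∫ u, expectedLoss ℓ (q u) (s u) ∂μ +
      ∫ u, (lab (y u) - q u) * lossGap ℓ (s u) ∂μ := by
  have hgap : Integrable (fun u => (lab (y u) - q u) * lossGap ℓ (s u)) μ := by
    refine .of_bound (by unfold lossGap; fun_prop) 2 (ae_of_all _ fun u => ?_)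
    rw [Real.norm_eq_abs, abs_mul]
    nlinarith [abs_lab_sub_le (y u) (hq u), abs_lossGap_le hℓ (hs u),
      abs_nonneg (lossGap ℓ (s u)), abs_nonneg (lab (y u) - q u)]
  rw [← integral_add (integrable_expectedLoss hℓm hℓ hqm hq hsm hs) hgap]
  exact integral_congr_ae (ae_of_all _ fun u => loss_eq_expectedLoss_add ℓ (y u) (q u) (s u))

end Loss

theorem MeasureTheory.MeasurePreserving.map_cond_preimage {α β : Type*} [MeasurableSpace α]
    [MeasurableSpace β] {μ : Measure α} {ν : Measure β} {f : α → β}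
    (hf : MeasurePreserving f μ ν) {S : Set β} (hS : MeasurableSet S) :
    (μ[|f ⁻¹' S]).map f = ν[|S] := by
  rw [ProbabilityTheory.cond, ProbabilityTheory.cond, Measure.map_smul,
    ← Measure.restrict_map hf.measurable hS, hf.map_eq, hf.measure_preimage hS.nullMeasurableSet]

theorem condE_eq_condER {Ω X : Type*} [MeasurableSpace Ω] [MeasurableSpace X]
    (π : Measure Ω) [IsProbabilityMeasure π] (D : Measure (X × Bool)) [SFinite D]
    {g : X → Bool} (hg : Measurable g) {f : X × Bool → ℝ} (hf : Measurable f) :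
    condE D g f = condER π D g fun u => f u.2 := by
  have hS : MeasurableSet {z : X × Bool | g z.1 = true} :=
    (hg.comp measurable_fst) (measurableSet_singleton true)
  rw [condE, condER, ← (measurePreserving_snd (μ := π) (ν := D)).map_cond_preimage hS,
    integral_map measurable_snd.aemeasurable hf.aestronglyMeasurable]
  rfl

section Panprediction

variable {U : Type*} [MeasurableSpace U] {μ : Measure U} [IsFiniteMeasure μ]
  {ℓ : ℝ → Bool → ℝ} {k : ℝ → ℝ} {y : U → Bool} {q s : U → ℝ} {c : ℝ}

theorem integral_loss_comp_le_integral_loss_add (hℓm : ∀ y, Measurable fun r => ℓ r y)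
    (hℓ : ∀ r ∈ Icc (0:ℝ) 1, ∀ y, ℓ r y ∈ Icc (-1:ℝ) 1)
    (hℓV : ∀ y, ∀ S ∈ partitionSums (fun r => ℓ r y), S ≤ 1) (hkm : Measurable k)
    (hk : ∀ q ∈ Icc (0:ℝ) 1, k q ∈ Icc (0:ℝ) 1)
    (hkopt : ∀ q ∈ Icc (0:ℝ) 1, ∀ r ∈ Icc (0:ℝ) 1, expectedLoss ℓ q (k q) ≤ expectedLoss ℓ q r)
    (hym : Measurable y) (hqm : Measurable q) (hq : ∀ u, q u ∈ Icc (0:ℝ) 1)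
    (hsm : Measurable s) (hs : ∀ u, s u ∈ Icc (0:ℝ) 1)
    (hcq : StepCalibrated μ (fun u => lab (y u) - q u) q c)
    (hcs : StepCalibrated μ (fun u => lab (y u) - q u) s c) :
    ∫ u, ℓ (k (q u)) (y u) ∂μ ≤ ∫ u, ℓ (s u) (y u) ∂μ + 10 * c := by
  have ha : Integrable (fun u => lab (y u) - q u) μ :=
    .of_bound (by fun_prop) 1 (ae_of_all _ fun u => abs_lab_sub_le (y u) (hq u))
  have hkqm : Measurable fun u => k (q u) := hkm.comp hqm
  have hkq : ∀ u, k (q u) ∈ Icc (0:ℝ) 1 := fun u => hk _ (hq u)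
  have hgap_k : |∫ u, (lab (y u) - q u) * lossGap ℓ (k (q u)) ∂μ| ≤ 6 * c := by
    refine (hcq.abs_integral_mul_comp_le_of_antitoneOn ha hqm hq
      (antitoneOn_lossGap_comp hk hkopt)).trans (mul_le_mul_of_nonneg_right ?_ hcq.nonneg)
    have h0 := abs_le.mp (abs_lossGap_le hℓ (hk 0 (left_mem_Icc.mpr zero_le_one)))
    have h1 := abs_lossGap_le hℓ (hk 1 (right_mem_Icc.mpr zero_le_one))
    linarith [h0.2, (abs_le.mp h1).1]
  have hgap_s : |∫ u, (lab (y u) - q u) * lossGap ℓ (s u) ∂μ| ≤ 4 * c := by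
    refine (hcs.abs_integral_mul_comp_le_of_partitionSums_le (R := lossGap ℓ) ha hsm hs
      (partitionSums_sub_le_s9 (hℓV true) (hℓV false))).trans
      (mul_le_mul_of_nonneg_right ?_ hcs.nonneg)
    linarith [abs_lossGap_le hℓ (right_mem_Icc.mpr zero_le_one)]
  have hexp : ∫ u, expectedLoss ℓ (q u) (k (q u)) ∂μ ≤ ∫ u, expectedLoss ℓ (q u) (s u) ∂μ :=
    integral_mono (integrable_expectedLoss hℓm hℓ hqm hq hkqm hkq)
      (integrable_expectedLoss hℓm hℓ hqm hq hsm hs) fun u => hkopt _ (hq u) _ (hs u)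
  rw [integral_loss_eq_integral_expectedLoss_add hℓm hℓ hym hqm hq hkqm hkq,
    integral_loss_eq_integral_expectedLoss_add hℓm hℓ hym hqm hq hsm hs]
  linarith [(abs_le.mp hgap_k).2, (abs_le.mp hgap_s).1]

end Panprediction

theorem stmt9_general {Ω X : Type*} [MeasurableSpace Ω] [MeasurableSpace X]
    (π : Measure Ω) [IsProbabilityMeasure π]
    (D : Measure (X × Bool)) [IsProbabilityMeasure D]
    (ε : ℝ)
    -- the loss class L ⊆ L_BV
    (L : Set (ℝ → Bool → ℝ))
    (hLmeas : ∀ ℓ ∈ L, ∀ y : Bool, Measurable (fun q => ℓ q y))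
    (hLbdd : ∀ ℓ ∈ L, ∀ q ∈ Icc (0:ℝ) 1, ∀ y : Bool, ℓ q y ∈ Icc (-1:ℝ) 1)
    (hLBV : ∀ ℓ ∈ L, ∀ y : Bool, ∀ S ∈ partitionSums (fun q => ℓ q y), S ≤ 1)
    (G : Set (X → Bool)) (hGmeas : ∀ g ∈ G, Measurable g)
    (H : Set (X → ℝ)) (hHne : H.Nonempty)
    (hHmeas : ∀ h ∈ H, Measurable h)
    (hHrange : ∀ h ∈ H, ∀ x, h x ∈ Icc (0:ℝ) 1)
    -- post-processings k ℓ for each loss ℓ ∈ L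
    (k : (ℝ → Bool → ℝ) → ℝ → ℝ)
    (hkmeas : ∀ ℓ ∈ L, Measurable (k ℓ))
    (hkrange : ∀ ℓ ∈ L, ∀ q ∈ Icc (0:ℝ) 1, k ℓ q ∈ Icc (0:ℝ) 1)
    (hkopt : ∀ ℓ ∈ L, ∀ q ∈ Icc (0:ℝ) 1, ∀ yhat ∈ Icc (0:ℝ) 1,
      q * ℓ (k ℓ q) true + (1 - q) * ℓ (k ℓ q) false ≤ q * ℓ yhat true + (1 - q) * ℓ yhat false)
    -- the randomized predictor: jointly measurable p : Ω × X → [0,1]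
    (p : Ω × X → ℝ) (hpmeas : Measurable p) (hprange : ∀ u, p u ∈ Icc (0:ℝ) 1)
    -- randomized (G, H, ε)-step calibration
    (hcal : ∀ v ∈ Icc (0:ℝ) 1, ∀ w ∈ Icc (0:ℝ) 1, ∀ h ∈ H, ∀ g ∈ G,
      |condER π D g (fun u => (lab u.2.2 - p (u.1, u.2.1)) *
        (if p (u.1, u.2.1) ≤ v then 1 else 0) * (if h u.2.1 ≤ w then 1 else 0))| ≤
        ε * Real.sqrt (1 / Pg D g)) :
    -- conclusion: randomized (L, G, H, 20 ε)-panprediction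
    ∀ ℓ ∈ L, ∀ g ∈ G,
      condER π D g (fun u => ℓ (k ℓ (p (u.1, u.2.1))) u.2.2) ≤
        sInf ((fun h => condE D g (fun z => ℓ (h z.1) z.2)) '' H) +
          20 * ε * Real.sqrt (1 / Pg D g) := by
  intro ℓ hℓ g hg
  obtain ⟨h₀, hh₀⟩ := id hHne
  set c := ε * Real.sqrt (1 / Pg D g)
  have hpm : Measurable fun u : Ω × (X × Bool) => p (u.1, u.2.1) := by fun_prop
  have hcp : StepCalibrated ((π.prod D)[|{u | g u.2.1 = true}])
      (fun u => lab u.2.2 - p (u.1, u.2.1)) (fun u => p (u.1, u.2.1)) c := fun w hw => by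
    rw [setIntegral_preimage_Iic_eq hpm]
    simpa [condER, c, fun x => (hHrange h₀ hh₀ x).2] using
      hcal w hw 1 (right_mem_Icc.mpr zero_le_one) h₀ hh₀ g hg
  have hbound : ∀ h ∈ H, condER π D g (fun u => ℓ (k ℓ (p (u.1, u.2.1))) u.2.2) ≤
      condE D g (fun z => ℓ (h z.1) z.2) + 10 * c := by
    intro h hh
    have hhm : Measurable fun u : Ω × (X × Bool) => h u.2.1 := (hHmeas h hh).comp (by fun_prop)
    have hch : StepCalibrated ((π.prod D)[|{u | g u.2.1 = true}])
        (fun u => lab u.2.2 - p (u.1, u.2.1)) (fun u => h u.2.1) c := fun w hw => by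
      rw [setIntegral_preimage_Iic_eq hhm]
      simpa [condER, c, fun u => (hprange u).2] using
        hcal 1 (right_mem_Icc.mpr zero_le_one) w hw h hh g hg
    rw [condE_eq_condER π D (hGmeas g hg) (measurable_from_prod_countable_left fun b =>
      (hLmeas ℓ hℓ b).comp (hHmeas h hh))]
    exact integral_loss_comp_le_integral_loss_add (hLmeas ℓ hℓ) (hLbdd ℓ hℓ) (hLBV ℓ hℓ)
      (hkmeas ℓ hℓ) (hkrange ℓ hℓ) (hkopt ℓ hℓ) (by fun_prop) hpm (fun u => hprange _) hhm
      (fun u => hHrange h hh _) hcp hch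
  have hinf := le_csInf (hHne.image _) (forall_mem_image.mpr fun h hh =>
    sub_le_iff_le_add.mpr (hbound h hh))
  linarith [hcp.nonneg]

/-- A randomized `(G, H, ε)`-step calibrated predictor is a randomized
`(L, G, H, 20ε)`-panpredictor. -/
theorem stmt9 {Ω X : Type*} [MeasurableSpace Ω] [MeasurableSpace X]
    (π : Measure Ω) [IsProbabilityMeasure π]
    (D : Measure (X × Bool)) [IsProbabilityMeasure D]
    (ε : ℝ) (hε : 0 < ε)
    -- the loss class L ⊆ L_BV
    (L : Set (ℝ → Bool → ℝ))
    (hLmeas : ∀ ℓ ∈ L, ∀ y : Bool, Measurable (fun q => ℓ q y))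
    (hLbdd : ∀ ℓ ∈ L, ∀ q ∈ Icc (0:ℝ) 1, ∀ y : Bool, ℓ q y ∈ Icc (-1:ℝ) 1)
    (hLBV : ∀ ℓ ∈ L, ∀ y : Bool, ∀ S ∈ partitionSums (fun q => ℓ q y), S ≤ 1)
    (G : Set (X → Bool)) (hGmeas : ∀ g ∈ G, Measurable g)
    (hGpos : ∀ g ∈ G, 0 < Pg D g)
    (H : Set (X → ℝ)) (hHne : H.Nonempty)
    (hHmeas : ∀ h ∈ H, Measurable h)
    (hHrange : ∀ h ∈ H, ∀ x, h x ∈ Icc (0:ℝ) 1)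
    -- post-processings k ℓ for each loss ℓ ∈ L
    (k : (ℝ → Bool → ℝ) → ℝ → ℝ)
    (hkmeas : ∀ ℓ ∈ L, Measurable (k ℓ))
    (hkrange : ∀ ℓ ∈ L, ∀ q ∈ Icc (0:ℝ) 1, k ℓ q ∈ Icc (0:ℝ) 1)
    (hkopt : ∀ ℓ ∈ L, ∀ q ∈ Icc (0:ℝ) 1, ∀ yhat ∈ Icc (0:ℝ) 1,
      q * ℓ (k ℓ q) true + (1 - q) * ℓ (k ℓ q) false ≤ q * ℓ yhat true + (1 - q) * ℓ yhat false)
    -- the randomized predictor: jointly measurable p : Ω × X → [0,1]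
    (p : Ω × X → ℝ) (hpmeas : Measurable p) (hprange : ∀ u, p u ∈ Icc (0:ℝ) 1)
    -- randomized (G, H, ε)-step calibration
    (hcal : ∀ v ∈ Icc (0:ℝ) 1, ∀ w ∈ Icc (0:ℝ) 1, ∀ h ∈ H, ∀ g ∈ G,
      |condER π D g (fun u => (lab u.2.2 - p (u.1, u.2.1)) *
        (if p (u.1, u.2.1) ≤ v then 1 else 0) * (if h u.2.1 ≤ w then 1 else 0))| ≤
        ε * Real.sqrt (1 / Pg D g)) :
    -- conclusion: randomized (L, G, H, 20 ε)-panprediction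
    ∀ ℓ ∈ L, ∀ g ∈ G,
      condER π D g (fun u => ℓ (k ℓ (p (u.1, u.2.1))) u.2.2) ≤
        sInf ((fun h => condE D g (fun z => ℓ (h z.1) z.2)) '' H) +
          20 * ε * Real.sqrt (1 / Pg D g) :=
  stmt9_general π D ε L hLmeas hLbdd hLBV G hGmeas H hHne hHmeas hHrange k hkmeas hkrange hkopt p
    hpmeas hprange hcal
end
end
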